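/- arXiv:1409.4575 — 3 statements merged into one kernel-verified Lean document; each statement's English description precedes it below -/
import Mathlib

section
/- Let 0 < q ≤ 1, Ω ∈ ℝ^{p×d}, x, x̄ ∈ ℝ^d with h = x − x̄, and let T₀ ⊆ {1,…,p} be an index set. If ‖Ω x̄‖_q^q ≤ ‖Ω x‖_q^q, then ‖(Ωh) restricted to the complement of T₀‖_q^q ≤ ‖(Ωh) restricted to T₀‖_q^q + 2‖(Ωx) restricted to the complement of T₀‖_q^q. -/
lemma abs_add_rpow_le (q : ℝ) (hq0 : 0 < q) (hq1 : q ≤ 1) (u v : ℝ) :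
    |u + v| ^ q ≤ |u| ^ q + |v| ^ q := by
  calc |u + v| ^ q ≤ (|u| + |v|) ^ q :=
        Real.rpow_le_rpow (abs_nonneg _) (abs_add_le u v) hq0.le
    _ ≤ |u| ^ q + |v| ^ q := by
        have := NNReal.rpow_add_le_add_rpow ⟨|u|, abs_nonneg u⟩ ⟨|v|, abs_nonneg v⟩ hq0.le hq1
        exact_mod_cast this

/-- Cone-type constraint for the `ℓ_q`-analysis minimizer (Lemma 2 of the paper). -/
theorem analysis_cone_constraint (q : ℝ) (hq0 : 0 < q) (hq1 : q ≤ 1)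
    (p d : ℕ) (Ω : Matrix (Fin p) (Fin d) ℝ) (x xbar : Fin d → ℝ)
    (h : Fin d → ℝ) (hh : h = x - xbar) (T₀ : Finset (Fin p))
    (hmin : ∑ i, |Ω.mulVec xbar i| ^ q ≤ ∑ i, |Ω.mulVec x i| ^ q) :
    ∑ i ∈ T₀ᶜ, |Ω.mulVec h i| ^ q ≤
      (∑ i ∈ T₀, |Ω.mulVec h i| ^ q) + 2 * ∑ i ∈ T₀ᶜ, |Ω.mulVec x i| ^ q := by
  set a := Ω.mulVec x with ha
  set b := Ω.mulVec xbar with hb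
  have hOh : ∀ i, Ω.mulVec h i = a i - b i := by
    intro i
    simp [hh, ha, hb, Matrix.mulVec, dotProduct, Finset.sum_sub_distrib,
      mul_sub, Pi.sub_apply]
  have hsplit : ∀ f : Fin p → ℝ, ∑ i, f i = ∑ i ∈ T₀, f i + ∑ i ∈ T₀ᶜ, f i := by
    intro f
    rw [← Finset.sum_add_sum_compl T₀ f]
  have key1 : ∀ i ∈ T₀ᶜ, |Ω.mulVec h i| ^ q - |a i| ^ q ≤ |b i| ^ q := by
    intro i _
    have := abs_add_rpow_le q hq0 hq1 (a i) (-(b i))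
    rw [← sub_eq_add_neg, abs_neg] at this
    rw [hOh i]
    linarith [this]
  have key2 : ∀ i ∈ T₀, |a i| ^ q ≤ |b i| ^ q + |Ω.mulVec h i| ^ q := by
    intro i _
    have := abs_add_rpow_le q hq0 hq1 (b i) (a i - b i)
    simp only [add_sub_cancel] at this
    rw [hOh i]
    linarith [this]
  have h1 : ∑ i ∈ T₀ᶜ, (|Ω.mulVec h i| ^ q - |a i| ^ q) ≤ ∑ i ∈ T₀ᶜ, |b i| ^ q :=
    Finset.sum_le_sum key1
  have h2 : ∑ i ∈ T₀, |a i| ^ q ≤ ∑ i ∈ T₀, (|b i| ^ q + |Ω.mulVec h i| ^ q) :=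
    Finset.sum_le_sum key2
  rw [hsplit (fun i => |b i| ^ q), hsplit (fun i => |a i| ^ q)] at hmin
  rw [Finset.sum_sub_distrib] at h1
  rw [Finset.sum_add_distrib] at h2
  linarith
end

section
/- Let A ∈ ℝ^{m×d} satisfy (1 − δ)‖v‖₂² ≤ ‖Av‖₂² for all v in the difference set of l-cosparse vectors, with δ < 1. Suppose y = Ax* + e with ‖e‖₂ ≤ ε, and let x̄ be an l-cosparse vector with (1/2)‖y − Ax̄‖₂² + λ‖Ωx̄‖_q^q ≤ F₀ for some bound F₀ ≥ 0. Then ‖x* − x̄‖₂ ≤ (1 − δ)^{−1/2}(√(2F₀) + ε), provided x* is also l-cosparse. -/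
/-- Recovery guarantee (Theorem 3 of the paper): under a lower A-RIP bound on
`(2l - p)`-cosparse vectors, an `l`-cosparse vector `x̄` with small objective
value is close to the true `l`-cosparse signal `x*`. -/
theorem coirlq_recovery_guarantee (m p d l : ℕ)
    (A : Matrix (Fin m) (Fin d) ℝ) (Ω : Matrix (Fin p) (Fin d) ℝ)
    (q lam δ ε F₀ : ℝ) (hq0 : 0 < q) (hq1 : q ≤ 1) (hlam : 0 < lam)
    (hδ : δ < 1) (hF₀ : 0 ≤ F₀)
    (hRIP : ∀ v : Fin d → ℝ,
      (2 * l - p : ℤ) ≤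
        ((Finset.univ.filter (fun j => Ω.mulVec v j = 0)).card : ℤ) →
      (1 - δ) * ∑ j, (v j) ^ 2 ≤ ∑ i, (A.mulVec v i) ^ 2)
    (xstar xbar : Fin d → ℝ) (e y : Fin m → ℝ)
    (hy : y = A.mulVec xstar + e)
    (he : Real.sqrt (∑ i, (e i) ^ 2) ≤ ε)
    (hxstar : l ≤ (Finset.univ.filter (fun j => Ω.mulVec xstar j = 0)).card)
    (hxbar : l ≤ (Finset.univ.filter (fun j => Ω.mulVec xbar j = 0)).card)
    (hobj : (1 / 2) * ∑ i, (y i - A.mulVec xbar i) ^ 2 +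
      lam * ∑ j, |Ω.mulVec xbar j| ^ q ≤ F₀) :
    Real.sqrt (∑ j, (xstar j - xbar j) ^ 2) ≤
      (Real.sqrt (1 - δ))⁻¹ * (Real.sqrt (2 * F₀) + ε) := by
  set v : Fin d → ℝ := xstar - xbar with hv
  have hδ0 : (0:ℝ) < 1 - δ := by linarith
  -- cosparsity of v
  have hcard : (2 * l - p : ℤ) ≤
      ((Finset.univ.filter (fun j => Ω.mulVec v j = 0)).card : ℤ) := by
    set S := Finset.univ.filter (fun j => Ω.mulVec xstar j = 0)
    set T := Finset.univ.filter (fun j => Ω.mulVec xbar j = 0)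
    set U := Finset.univ.filter (fun j => Ω.mulVec v j = 0)
    have hsub : S ∩ T ⊆ U := by
      intro j hj
      simp only [S, T, U, Finset.mem_inter, Finset.mem_filter, Finset.mem_univ,
        true_and] at hj ⊢
      show Ω.mulVec (xstar - xbar) j = 0
      rw [Matrix.mulVec_sub, Pi.sub_apply, hj.1, hj.2, sub_zero]
    have h1 : S.card + T.card - p ≤ (S ∩ T).card := by
      have := Finset.card_union_add_card_inter S T
      have h2 : (S ∪ T).card ≤ p := by
        calc (S ∪ T).card ≤ (Finset.univ : Finset (Fin p)).card :=
          Finset.card_le_card (Finset.subset_univ _)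
        _ = p := by simp
      omega
    have := Finset.card_le_card hsub
    omega
  have hRip := hRIP v hcard
  -- norm bound
  have hAv : ∀ i, A.mulVec v i = (y i - A.mulVec xbar i) + (- e i) := by
    intro i
    rw [hv, Matrix.mulVec_sub, Pi.sub_apply, hy]
    simp [Matrix.mulVec]
    ring
  -- triangle inequality via sqrt of sums
  have htri : Real.sqrt (∑ i, (A.mulVec v i) ^ 2) ≤
      Real.sqrt (∑ i, (y i - A.mulVec xbar i) ^ 2) + Real.sqrt (∑ i, (e i) ^ 2) := by
    let a : EuclideanSpace ℝ (Fin m) := WithLp.toLp 2 (fun i => y i - A.mulVec xbar i)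
    let b : EuclideanSpace ℝ (Fin m) := WithLp.toLp 2 (fun i => - e i)
    have hna : ‖a‖ = Real.sqrt (∑ i, (y i - A.mulVec xbar i) ^ 2) := by
      simp only [a, EuclideanSpace.norm_eq, Real.norm_eq_abs, sq_abs, WithLp.ofLp_toLp]
    have hnb : ‖b‖ = Real.sqrt (∑ i, (e i) ^ 2) := by
      simp only [b, EuclideanSpace.norm_eq, Real.norm_eq_abs, sq_abs, neg_sq, WithLp.ofLp_toLp]
    have hnab : ‖a + b‖ = Real.sqrt (∑ i, (A.mulVec v i) ^ 2) := by
      simp only [EuclideanSpace.norm_eq, Real.norm_eq_abs, sq_abs]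
      congr 1; apply Finset.sum_congr rfl; intro i _
      rw [hAv i]; rfl
    rw [← hna, ← hnb, ← hnab]
    exact norm_add_le a b
  -- data fit bound
  have hfit : Real.sqrt (∑ i, (y i - A.mulVec xbar i) ^ 2) ≤ Real.sqrt (2 * F₀) := by
    apply Real.sqrt_le_sqrt
    have hpen : 0 ≤ lam * ∑ j, |Ω.mulVec xbar j| ^ q := by
      apply mul_nonneg hlam.le
      apply Finset.sum_nonneg
      intro j _
      exact Real.rpow_nonneg (abs_nonneg _) q
    linarith
  have he0 : (0:ℝ) ≤ Real.sqrt (∑ i, (e i) ^ 2) := Real.sqrt_nonneg _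
  have hAvB : Real.sqrt (∑ i, (A.mulVec v i) ^ 2) ≤ Real.sqrt (2 * F₀) + ε := by
    calc Real.sqrt (∑ i, (A.mulVec v i) ^ 2)
        ≤ Real.sqrt (∑ i, (y i - A.mulVec xbar i) ^ 2) + Real.sqrt (∑ i, (e i) ^ 2) := htri
      _ ≤ Real.sqrt (2 * F₀) + ε := add_le_add hfit he
  -- combine with RIP
  have hsum : ∑ j, (v j) ^ 2 ≤ (1 - δ)⁻¹ * ∑ i, (A.mulVec v i) ^ 2 := by
    rw [inv_mul_eq_div, le_div_iff₀ hδ0, mul_comm]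
    exact hRip
  have hfinal : Real.sqrt (∑ j, (v j) ^ 2) ≤
      (Real.sqrt (1 - δ))⁻¹ * Real.sqrt (∑ i, (A.mulVec v i) ^ 2) := by
    rw [← Real.sqrt_inv, ← Real.sqrt_mul (by positivity)]
    exact Real.sqrt_le_sqrt hsum
  have hvj : ∀ j, v j = xstar j - xbar j := fun j => rfl
  calc Real.sqrt (∑ j, (xstar j - xbar j) ^ 2)
      = Real.sqrt (∑ j, (v j) ^ 2) := by simp [hvj]
    _ ≤ (Real.sqrt (1 - δ))⁻¹ * Real.sqrt (∑ i, (A.mulVec v i) ^ 2) := hfinal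
    _ ≤ (Real.sqrt (1 - δ))⁻¹ * (Real.sqrt (2 * F₀) + ε) := by
        apply mul_le_mul_of_nonneg_left hAvB
        positivity
end

section
/- Let 0 < q ≤ 1 and let u ∈ ℝ^p be partitioned into consecutive blocks T₁, T₂, … of size M each (ordered so that entries within each block are in nonincreasing order of absolute value across the partition, i.e., every entry of block T_{j+1} has absolute value at most every entry of block T_j). Then Σ_{j≥2} ‖u_{T_j}‖₂^q ≤ M^{q/2 − 1} Σ_{j≥1} ‖u_{T_j}‖_q^q. -/
/-- Block-decomposition estimate (Lemma 3 of the paper): for blocks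
`b 0, b 1, …, b (Nb - 1)` of size `M` ordered so that every entry of block
`j+1` is dominated in absolute value by every entry of block `j`,
`∑_{j ≥ 2} ‖b j‖₂^q ≤ M^(q/2 - 1) * ∑_{j ≥ 1} ‖b j‖_q^q` (blocks indexed from
`0`, so block `0` is `T₁`). -/
theorem block_decomposition_estimate (q : ℝ) (hq0 : 0 < q) (hq1 : q ≤ 1)
    (M Nb : ℕ) (hM : 1 ≤ M) (b : ℕ → Fin M → ℝ)
    (horder : ∀ j, j + 1 < Nb → ∀ k k' : Fin M, |b (j + 1) k| ≤ |b j k'|) :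
    ∑ j ∈ Finset.Ico 1 Nb, Real.sqrt (∑ k, (b j k) ^ 2) ^ q ≤
      (M : ℝ) ^ (q / 2 - 1) * ∑ j ∈ Finset.range Nb, ∑ k, |b j k| ^ q := by
  have hMpos : (0:ℝ) < M := by exact_mod_cast hM
  have hne : (Finset.univ : Finset (Fin M)).Nonempty := ⟨⟨0, hM⟩, Finset.mem_univ _⟩
  have hC : (0:ℝ) ≤ (M:ℝ) ^ (q/2 - 1) := (Real.rpow_pos_of_pos hMpos _).le
  have key : ∀ i, i + 1 < Nb →
      Real.sqrt (∑ k, (b (i+1) k) ^ 2) ^ q ≤ (M:ℝ) ^ (q/2 - 1) * ∑ k, |b i k| ^ q := by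
    intro i hi
    set m := Finset.univ.inf' hne (fun k => |b i k|) with hm
    have hm0 : 0 ≤ m := Finset.le_inf' hne _ (fun k _ => abs_nonneg _)
    have hbound : ∀ k : Fin M, |b (i+1) k| ≤ m :=
      fun k => Finset.le_inf' hne _ (fun k' _ => horder i hi k k')
    have hsum : ∑ k, (b (i+1) k)^2 ≤ (M:ℝ) * m^2 := by
      calc ∑ k, (b (i+1) k)^2 ≤ ∑ _k : Fin M, m^2 :=
            Finset.sum_le_sum (fun k _ => by
              rw [← sq_abs]; exact pow_le_pow_left₀ (abs_nonneg _) (hbound k) 2)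
        _ = (M:ℝ) * m^2 := by simp [mul_comm]
    have hsqrt : Real.sqrt (∑ k, (b (i+1) k)^2) ≤ Real.sqrt M * m := by
      have := Real.sqrt_le_sqrt hsum
      rwa [Real.sqrt_mul hMpos.le, Real.sqrt_sq hm0] at this
    have h1 : Real.sqrt (∑ k, (b (i+1) k)^2) ^ q ≤ (Real.sqrt M * m) ^ q :=
      Real.rpow_le_rpow (Real.sqrt_nonneg _) hsqrt hq0.le
    have h2 : (Real.sqrt M * m) ^ q = (M:ℝ)^(q/2 - 1) * ((M:ℝ) * m ^ q) := by
      rw [Real.mul_rpow (Real.sqrt_nonneg _) hm0, Real.sqrt_eq_rpow,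
        ← Real.rpow_mul hMpos.le, Real.rpow_sub hMpos, Real.rpow_one,
        show (1/2:ℝ)*q = q/2 by ring]
      field_simp
    have h3 : (M:ℝ) * m^q ≤ ∑ k, |b i k| ^ q := by
      calc (M:ℝ) * m^q = ∑ _k : Fin M, m^q := by simp [mul_comm]
        _ ≤ _ := Finset.sum_le_sum (fun k _ =>
            Real.rpow_le_rpow hm0 (Finset.inf'_le _ (Finset.mem_univ k)) hq0.le)
    calc Real.sqrt (∑ k, (b (i+1) k)^2) ^ q ≤ (Real.sqrt M * m) ^ q := h1
      _ = (M:ℝ)^(q/2 - 1) * ((M:ℝ) * m ^ q) := h2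
      _ ≤ (M:ℝ)^(q/2 - 1) * ∑ k, |b i k| ^ q := mul_le_mul_of_nonneg_left h3 hC
  have step1 : ∑ j ∈ Finset.Ico 1 Nb, Real.sqrt (∑ k, (b j k) ^ 2) ^ q ≤
      ∑ j ∈ Finset.range (Nb - 1), (M:ℝ)^(q/2 - 1) * ∑ k, |b j k| ^ q := by
    rw [Finset.sum_Ico_eq_sum_range]
    refine Finset.sum_le_sum (fun i hiℹ => ?_)
    have hi : i + 1 < Nb := by
      have := Finset.mem_range.mp hiℹ; omega
    simpa [add_comm] using key i hi
  refine step1.trans ?_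
  rw [← Finset.mul_sum]
  refine mul_le_mul_of_nonneg_left ?_ hC
  refine Finset.sum_le_sum_of_subset_of_nonneg (Finset.range_subset_range.mpr (by omega)) ?_
  intro j _ _
  exact Finset.sum_nonneg (fun k _ => Real.rpow_nonneg (abs_nonneg _) q)
end
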